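/- arXiv:1605.00254 — 2 statements merged into one kernel-verified Lean document; each statement's English description precedes it below -/
import Mathlib

section
/- Let G be a group and ω a normalized 3-cocycle on G with comultiplicative phase γ. Then for all g, h, k, x ∈ G: γ_x(g,h)·γ_x(gh,k)·ω(x⁻¹gx, x⁻¹hx, x⁻¹kx) = γ_x(h,k)·γ_x(g,hk)·ω(g,h,k). -/
/-- The comultiplicative phase `γ_x(g,h)` of a 3-cocycle `ω`. -/
noncomputable def gammaPh {G : Type*} [Group G] (ω : G → G → G → ℂ) (x g h : G) : ℂ :=
  ω g h x * ω x (x⁻¹ * g * x) (x⁻¹ * h * x) / ω g x (x⁻¹ * h * x)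

/-!
After clearing the denominators of the three phases, the identity is the product of four
instances of the cocycle condition, at `(g, h, k, x)`, `(g, h, x, k')`, `(g, x, h', k')` and
`(x, g', h', k')`, where `g' = x⁻¹gx` and so on; they fit together because `x * g' = g * x`
and `g' * h' = x⁻¹(gh)x`.
-/

section

variable {G : Type*} [Group G]

lemma mul_conj_eq (x g : G) : x * (x⁻¹ * g * x) = g * x := by group

lemma conj_mul_conj (x g h : G) : x⁻¹ * g * x * (x⁻¹ * h * x) = x⁻¹ * (g * h) * x := by group

theorem gammaPh_coassoc_of_ne_zero (ω : G → G → G → ℂ) (hne : ∀ a b c : G, ω a b c ≠ 0)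
    (hcoc : ∀ a b c d : G,
      ω a b c * ω a (b * c) d * ω b c d = ω (a * b) c d * ω a b (c * d))
    (g h k x : G) :
    gammaPh ω x g h * gammaPh ω x (g * h) k * ω (x⁻¹ * g * x) (x⁻¹ * h * x) (x⁻¹ * k * x)
      = gammaPh ω x h k * gammaPh ω x g (h * k) * ω g h k := by
  unfold gammaPh
  rw [← conj_mul_conj x h k, ← conj_mul_conj x g h]
  set g' := x⁻¹ * g * x
  set h' := x⁻¹ * h * x
  set k' := x⁻¹ * k * x
  have c₁ := hcoc g h k x
  have c₂ : ω g h x * ω g (h * x) k' * ω h x k' = ω (g * h) x k' * ω g h (k * x) := by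
    rw [← mul_conj_eq x k]; exact hcoc g h x k'
  have c₃ : ω g x h' * ω g (h * x) k' * ω x h' k' = ω (g * x) h' k' * ω g x (h' * k') := by
    rw [← mul_conj_eq x h]; exact hcoc g x h' k'
  have c₄ : ω x g' h' * ω x (g' * h') k' * ω g' h' k' = ω (g * x) h' k' * ω x g' (h' * k') := by
    rw [← mul_conj_eq x g]; exact hcoc x g' h' k'
  field_simp [hne g x h', hne (g * h) x k', hne h x k', hne g x (h' * k')]
  linear_combination
    (ω g h x * ω h x k' * ω (g * h) k x * ω g x (h' * k')) * c₄
    - (ω g h x * ω h x k' * ω (g * h) k x * ω x g' (h' * k')) * c₃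
    + (ω (g * h) k x * ω x g' (h' * k') * ω g x h' * ω x h' k') * c₂
    - (ω x g' (h' * k') * ω g x h' * ω x h' k' * ω (g * h) x k') * c₁

end

theorem gamma_coassoc_general {G : Type*} [Group G] (ω : G → G → G → ℂ)
    (habs : ∀ a b c : G, ‖ω a b c‖ = 1)
    (hcoc : ∀ a b c d : G,
      ω a b c * ω a (b * c) d * ω b c d = ω (a * b) c d * ω a b (c * d)) :
    ∀ g h k x : G,
      gammaPh ω x g h * gammaPh ω x (g * h) k
          * ω (x⁻¹ * g * x) (x⁻¹ * h * x) (x⁻¹ * k * x)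
        = gammaPh ω x h k * gammaPh ω x g (h * k) * ω g h k :=
  gammaPh_coassoc_of_ne_zero ω
    (fun a b c => norm_ne_zero_iff.mp (by rw [habs]; exact one_ne_zero)) hcoc

/-- For a normalized 3-cocycle `ω` on `G` with comultiplicative phase `γ`, we have
`γ_x(g,h)·γ_x(gh,k)·ω(x⁻¹gx, x⁻¹hx, x⁻¹kx) = γ_x(h,k)·γ_x(g,hk)·ω(g,h,k)`. -/
theorem gamma_coassoc {G : Type*} [Group G] (ω : G → G → G → ℂ)
    (habs : ∀ a b c : G, ‖ω a b c‖ = 1)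
    (hcoc : ∀ a b c d : G,
      ω a b c * ω a (b * c) d * ω b c d = ω (a * b) c d * ω a b (c * d))
    (hnorm : ∀ g h : G, ω g 1 h = 1) :
    ∀ g h k x : G,
      gammaPh ω x g h * gammaPh ω x (g * h) k
          * ω (x⁻¹ * g * x) (x⁻¹ * h * x) (x⁻¹ * k * x)
        = gammaPh ω x h k * gammaPh ω x g (h * k) * ω g h k :=
  gamma_coassoc_general ω habs hcoc
end

section
/- Let A and B be finite abelian groups and p : A × B → ℂ satisfy the unitality, counitality, multiplicativity, comultiplicativity, and nondegeneracy conditions. Then the map σ : A × B → ℂ defined by σ(a,b) = |A|·p(a,b) takes nonzero values and is a bicharacter: σ(aa′,b) = σ(a,b)·σ(a′,b) and σ(a,bb′) = σ(a,b)·σ(a,b′) for all a, a′ ∈ A and b, b′ ∈ B. -/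
/-!
Write `f ⋆ g` for the convolution `(f ⋆ g)(x) = ∑ₜ f(x t⁻¹) g(t)` on `ℂ^A`. Comultiplicativity
says the columns `p(·, b)` are orthogonal idempotents for `⋆`, and multiplicativity says the same
of the rows `p(a, ·)` on `ℂ^B`. Nonzero orthogonal idempotents are linearly independent, so
`|A| = |B|` and the columns form a basis of `ℂ^A`. Convolution on the right commutes with left
translation, so every translate of a column `p(·, b)` is again a fixed point of `⋆ p(·, b)`;
expanding it in the basis shows it is a multiple of `p(·, b)`. Hence each column (and likewise
each row) is a scalar multiple of a character. Unitality at `b = 1` and counitality at `a = 1`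
give nonzero character sums, so those characters are trivial:
`p(a, 1) = p(1, b) = p(1, 1) = 1/|A|`.
-/

open Finset

section Convolution

variable {G K : Type*} [Group G] [Fintype G]

section CommSemiring

variable [CommSemiring K]

/-- `convRight v u = u ⋆ v`. -/
def convRight (v : G → K) : (G → K) →ₗ[K] G → K where
  toFun u x := ∑ t, u (x * t⁻¹) * v t
  map_add' u u' := by ext x; simp [add_mul, sum_add_distrib]
  map_smul' r u := by ext x; simp [mul_sum, mul_assoc]

lemma convRight_apply (v u : G → K) (x : G) : convRight v u x = ∑ t, u (x * t⁻¹) * v t := rfl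

lemma convRight_translate (v u : G → K) (x : G) :
    convRight v (fun a => u (x * a)) = fun a => convRight v u (x * a) := by
  ext a
  simp only [convRight_apply, mul_assoc]

def ConvOrthogonalIdempotents {ι : Type*} [DecidableEq ι] (f : ι → G → K) : Prop :=
  ∀ i j, convRight (f j) (f i) = if i = j then f i else 0

lemma ConvOrthogonalIdempotents.convRight_sum_smul {ι : Type*} [Fintype ι] [DecidableEq ι]
    {f : ι → G → K} (orth : ConvOrthogonalIdempotents f) (r : ι → K) (j : ι) :
    convRight (f j) (∑ i, r i • f i) = r j • f j := by
  simp [orth _ j]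

end CommSemiring

namespace ConvOrthogonalIdempotents

variable [Field K] {ι : Type*} [Fintype ι] [DecidableEq ι] {f : ι → G → K}

lemma linearIndependent (orth : ConvOrthogonalIdempotents f) (hf : ∀ i, f i ≠ 0) :
    LinearIndependent K f := by
  rw [Fintype.linearIndependent_iff]
  intro r hr j
  have h := orth.convRight_sum_smul r j
  rw [hr, map_zero] at h
  exact (smul_eq_zero.mp h.symm).resolve_right (hf j)

lemma card_le (orth : ConvOrthogonalIdempotents f) (hf : ∀ i, f i ≠ 0) :
    Fintype.card ι ≤ Fintype.card G := by
  simpa using (orth.linearIndependent hf).fintype_card_le_finrank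

lemma exists_translate_eq_smul (orth : ConvOrthogonalIdempotents f) (hf : ∀ i, f i ≠ 0)
    (hcard : Fintype.card ι = Fintype.card G) (j : ι) (x : G) :
    ∃ r : K, ∀ a, f j (x * a) = r * f j a := by
  set u : G → K := fun a => f j (x * a)
  have hspan := (orth.linearIndependent hf).span_eq_top_of_card_eq_finrank'
    (by simpa using hcard)
  obtain ⟨r, hr⟩ :=
    (Submodule.mem_span_range_iff_exists_fun K).mp (hspan ▸ Submodule.mem_top : u ∈ _)
  have hfixed : convRight (f j) u = u := by
    rw [convRight_translate, orth, if_pos rfl]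
  refine ⟨r j, fun a => congrFun (?_ : u = r j • f j) a⟩
  rw [← hfixed, ← hr, orth.convRight_sum_smul]

end ConvOrthogonalIdempotents

end Convolution

/-- Equivalently, `φ = φ 1 • χ` for a monoid hom `χ`. -/
def IsCharacterMultiple {G R : Type*} [Mul G] [One G] [Mul R] (φ : G → R) : Prop :=
  ∀ x y, φ (x * y) * φ 1 = φ x * φ y

namespace IsCharacterMultiple

lemma of_translate {G R : Type*} [MulOneClass G] [CommMonoid R] {φ : G → R}
    (h : ∀ x, ∃ r, ∀ a, φ (x * a) = r * φ a) : IsCharacterMultiple φ := by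
  intro x y
  obtain ⟨r, hr⟩ := h x
  have hx : φ x = r * φ 1 := by simpa using hr 1
  rw [hr y, hx, mul_right_comm, mul_assoc]

lemma apply_one_ne_zero {G R : Type*} [MulOneClass G] [MulZeroClass R] [NoZeroDivisors R]
    {φ : G → R} (hφ : IsCharacterMultiple φ) (hne : ∃ x, φ x ≠ 0) : φ 1 ≠ 0 := by
  obtain ⟨x, hx⟩ := hne
  intro h1
  have h := hφ x x
  rw [h1, mul_zero] at h
  exact hx (mul_self_eq_zero.mp h.symm)

lemma apply_ne_zero {G R : Type*} [Group G] [MulZeroClass R] [NoZeroDivisors R] {φ : G → R}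
    (hφ : IsCharacterMultiple φ) (h1 : φ 1 ≠ 0) (x : G) : φ x ≠ 0 := by
  have h := hφ x x⁻¹
  rw [mul_inv_cancel] at h
  exact left_ne_zero_of_mul (h ▸ mul_ne_zero h1 h1)

lemma eq_apply_one_of_sum_ne_zero {G R : Type*} [Group G] [Fintype G] [CommRing R] [IsDomain R]
    {φ : G → R} (hφ : IsCharacterMultiple φ)
    (hs : ∑ g, φ g ≠ 0) (g : G) : φ g = φ 1 := by
  have htranslate : ∑ a, φ (g * a) = ∑ a, φ a := Equiv.sum_comp (Equiv.mulLeft g) φ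
  refine mul_right_cancel₀ hs ?_
  calc φ g * ∑ a, φ a = ∑ a, φ (g * a) * φ 1 := by
        rw [Finset.mul_sum]; exact Finset.sum_congr rfl fun a _ => (hφ g a).symm
    _ = φ 1 * ∑ a, φ a := by rw [← Finset.sum_mul, htranslate, mul_comm]

end IsCharacterMultiple

/-- Under the unitality, counitality, multiplicativity, comultiplicativity and
nondegeneracy conditions, the map `σ(a,b) = |A|·p(a,b)` takes nonzero values and is a
bicharacter of `A × B`. -/
theorem p_bicharacter {A B : Type*} [CommGroup A] [CommGroup B] [Fintype A] [Fintype B]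
    [DecidableEq A] [DecidableEq B] (p : A → B → ℂ)
    (hUnit : ∀ b : B, ∑ a : A, p a b = if b = 1 then 1 else 0)
    (hCounit : ∀ a : A, ∑ b : B, p a b = if a = 1 then 1 else 0)
    (hMul : ∀ (x y : A) (b : B),
      ∑ t : B, p x (b * t⁻¹) * p y t = if x = y then p x b else 0)
    (hComul : ∀ (x : A) (b c : B),
      ∑ t : A, p (x * t⁻¹) b * p t c = if b = c then p x b else 0)
    (hNdgA : ∀ a : A, ∃ b : B, p a b ≠ 0)
    (hNdgB : ∀ b : B, ∃ a : A, p a b ≠ 0) :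
    (∀ (a : A) (b : B), (Fintype.card A : ℂ) * p a b ≠ 0) ∧
    (∀ (a a' : A) (b : B),
      (Fintype.card A : ℂ) * p (a * a') b
        = ((Fintype.card A : ℂ) * p a b) * ((Fintype.card A : ℂ) * p a' b)) ∧
    (∀ (a : A) (b b' : B),
      (Fintype.card A : ℂ) * p a (b * b')
        = ((Fintype.card A : ℂ) * p a b) * ((Fintype.card A : ℂ) * p a b')) := by
  set N : ℂ := (Fintype.card A : ℂ)
  have orthRows : ConvOrthogonalIdempotents p := fun x y => by
    ext b; rw [convRight_apply, hMul]; split_ifs <;> rfl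
  have orthCols : ConvOrthogonalIdempotents fun b a => p a b := fun b c => by
    ext x; rw [convRight_apply, hComul]; split_ifs <;> rfl
  have rows_ne : ∀ a, p a ≠ 0 := fun a => Function.ne_iff.mpr (hNdgA a)
  have cols_ne : ∀ b, (p · b) ≠ 0 := fun b => Function.ne_iff.mpr (hNdgB b)
  have hcard : Fintype.card A = Fintype.card B := le_antisymm
    (orthRows.card_le rows_ne) (orthCols.card_le cols_ne)
  have hcol : ∀ b, IsCharacterMultiple (p · b) := fun b => .of_translate
    (orthCols.exists_translate_eq_smul cols_ne hcard.symm b)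
  have hrow : ∀ a, IsCharacterMultiple (p a) := fun a => .of_translate
    (orthRows.exists_translate_eq_smul rows_ne hcard a)
  have hcol₁ : ∀ a, p a 1 = p 1 1 :=
    (hcol 1).eq_apply_one_of_sum_ne_zero (by rw [hUnit]; simp)
  have hrow₁ : ∀ b, p 1 b = p 1 1 :=
    (hrow 1).eq_apply_one_of_sum_ne_zero (by rw [hCounit]; simp)
  have hN : N * p 1 1 = 1 := by
    simpa [hcol₁, N] using hUnit 1
  refine ⟨fun a b => ?_, fun a a' b => ?_, fun a b b' => ?_⟩
  · exact mul_ne_zero (left_ne_zero_of_mul_eq_one hN)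
      ((hcol b).apply_ne_zero ((hcol b).apply_one_ne_zero (hNdgB b)) a)
  · have h : p (a * a') b * p 1 1 = p a b * p a' b := hrow₁ b ▸ hcol b a a'
    linear_combination N ^ 2 * h - N * p (a * a') b * hN
  · have h : p a (b * b') * p 1 1 = p a b * p a b' := hcol₁ a ▸ hrow a b b'
    linear_combination N ^ 2 * h - N * p a (b * b') * hN
end
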